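/- arXiv:2303.00696 — 8 statements merged into one kernel-verified Lean document; each statement's English description precedes it below -/
import Mathlib

section
/- Let Z be a real Hilbert space and J proper convex lsc. For any u ∈ dom(J) and p ∈ Z, the Bregman loss satisfies B_J(u,p) = ½‖u − prox_J(p)‖² + D_J^{p − prox_J(p)}(u, prox_J(p)), where D_J^q(u,w) := J(u) − J(w) − ⟨q, u − w⟩ is the Bregman distance associated to the subgradient q = p − prox_J(p) ∈ ∂J(prox_J(p)). -/
open RealInnerProductSpace

noncomputable section

variable {Z : Type*} [NormedAddCommGroup Z] [InnerProductSpace ℝ Z] [CompleteSpace Z]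

/-- Convex subdifferential of an extended-real-valued functional. -/
def Subdiff (J : Z → EReal) (u : Z) : Set Z :=
  {p | ∀ w, J u + ((⟪p, w - u⟫ : ℝ) : EReal) ≤ J w}

/-- Proper: not identically +∞ and nowhere -∞. -/
def ProperE (J : Z → EReal) : Prop := (∃ u, J u ≠ ⊤) ∧ ∀ u, J u ≠ ⊥

/-- Convexity for extended-real-valued functionals. -/
def EConvexOn (J : Z → EReal) : Prop :=
  ∀ u v : Z, ∀ a b : ℝ, 0 ≤ a → 0 ≤ b → a + b = 1 →
    J (a • u + b • v) ≤ (a : EReal) * J u + (b : EReal) * J v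

/-- u is a proximal point of J at z: it minimises w ↦ ½‖w - z‖² + J w. -/
def IsProx (J : Z → EReal) (z u : Z) : Prop :=
  ∀ w, ((1/2 * ‖u - z‖^2 : ℝ) : EReal) + J u ≤ ((1/2 * ‖w - z‖^2 : ℝ) : EReal) + J w

/-- Fenchel conjugate of an extended-real-valued functional. -/
def Econj (F : Z → EReal) (p : Z) : EReal := ⨆ u, ((⟪p, u⟫ : ℝ) : EReal) - F u

/-- The Bregman loss B_J(u, p) = (½‖·‖² + J)(u) + (½‖·‖² + J)⋆(p) - ⟨p, u⟩. -/
def BregLoss (J : Z → EReal) (u p : Z) : EReal :=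
  ((1/2 * ‖u‖^2 : ℝ) : EReal) + J u
    + Econj (fun w => ((1/2 * ‖w‖^2 : ℝ) : EReal) + J w) p
    - ((⟪p, u⟫ : ℝ) : EReal)

/-- Decomposition B_J(u,p) = ½‖u - prox_J(p)‖² + D_J^q(u, prox_J(p)) with
q = p - prox_J(p) ∈ ∂J(prox_J(p)). -/
theorem bregLoss_decomposition (J : Z → EReal)
    (hproper : ProperE J) (hconv : EConvexOn J) (hlsc : LowerSemicontinuous J)
    (u : Z) (hu : J u ≠ ⊤) (p m : Z) (hm : IsProx J p m) :
    p - m ∈ Subdiff J m ∧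
      BregLoss J u p =
        ((1/2 * ‖u - m‖^2 : ℝ) : EReal)
          + (J u - J m - ((⟪p - m, u - m⟫ : ℝ) : EReal)) := by
  obtain ⟨w0, hw0⟩ := hproper.1
  have hbot := hproper.2
  -- J m is finite
  have hJm_top : J m ≠ ⊤ := by
    intro h
    have hw0' := EReal.coe_toReal hw0 (hbot w0)
    have h1 := hm w0
    rw [h, EReal.add_top_of_ne_bot (EReal.coe_ne_bot _), ← hw0'] at h1
    have h2 : (⊤:EReal) ≤ ((1/2 * ‖w0 - p‖^2 + (J w0).toReal : ℝ) : EReal) := by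
      push_cast
      exact h1
    exact (EReal.coe_ne_top _) (top_le_iff.mp h2)
  set jm : ℝ := (J m).toReal with hjm_def
  have hjm : ((jm : ℝ) : EReal) = J m := EReal.coe_toReal hJm_top (hbot m)
  -- Subdifferential claim
  have hsub : p - m ∈ Subdiff J m := by
    intro w
    by_cases hw : J w = ⊤
    · simp [hw]
    · have hjw : (((J w).toReal : ℝ) : EReal) = J w := EReal.coe_toReal hw (hbot w)
      set jw : ℝ := (J w).toReal
      rw [← hjm, ← hjw]
      have key : ∀ t : ℝ, 0 < t → t ≤ 1 →
          jm + ⟪p - m, w - m⟫ ≤ jw + t/2 * ‖w - m‖^2 := by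
        intro t ht ht1
        have h1 := hm ((1-t) • m + t • w)
        have h2 := hconv m w (1-t) t (by linarith) ht.le (by ring)
        rw [← hjm, ← hjw] at h2
        have h2' : J ((1-t) • m + t • w) ≤ (((1-t)*jm + t*jw : ℝ) : EReal) := by
          refine h2.trans_eq ?_
          norm_cast
        have h3 : ((1/2 * ‖m - p‖^2 + jm : ℝ) : EReal) ≤
            ((1/2 * ‖(1-t) • m + t • w - p‖^2 + ((1-t)*jm + t*jw) : ℝ) : EReal) := by
          push_cast
          rw [← hjm] at h1
          have h5 := h1.trans (add_le_add_right h2' _)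
          push_cast at h5
          exact h5
        have h4 : (1/2 * ‖m - p‖^2 + jm : ℝ) ≤
            1/2 * ‖(1-t) • m + t • w - p‖^2 + ((1-t)*jm + t*jw) := by exact_mod_cast h3
        have hz : (1-t) • m + t • w - p = (m - p) + t • (w - m) := by
          module
        rw [hz] at h4
        have hexp : ‖(m - p) + t • (w - m)‖^2 =
            ‖m - p‖^2 + 2 * (t * ⟪m - p, w - m⟫) + t^2 * ‖w - m‖^2 := by
          rw [norm_add_sq_real, real_inner_smul_right, norm_smul]
          simp [abs_of_pos ht, mul_pow]
        rw [hexp] at h4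
        have hip : ⟪p - m, w - m⟫ = -⟪m - p, w - m⟫ := by
          rw [show p - m = -(m - p) by abel, inner_neg_left]
        rw [hip]
        -- from h4 : t*jm ≤ t*⟪m-p,w-m⟫ + t²/2‖w-m‖² + t*jw ; divide by t
        have h5 : t * (jm + -⟪m - p, w - m⟫) ≤ t * (jw + t/2 * ‖w - m‖^2) := by
          nlinarith [h4]
        exact le_of_mul_le_mul_left (by linarith [h5]) ht
      have hreal : jm + ⟪p - m, w - m⟫ ≤ jw := by
        apply le_of_forall_pos_le_add
        intro ε hε
        have hden : (0:ℝ) < ‖w - m‖^2 + 1 := by positivity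
        set t : ℝ := min 1 (2*ε/(‖w - m‖^2 + 1)) with ht_def
        have ht0 : 0 < t := lt_min one_pos (by positivity)
        have ht1 : t ≤ 1 := min_le_left _ _
        have h6 := key t ht0 ht1
        have h7 : t ≤ 2*ε/(‖w - m‖^2 + 1) := min_le_right _ _
        have h8 : t * (‖w - m‖^2 + 1) ≤ 2*ε := by
          rw [div_eq_mul_inv] at h7
          calc t * (‖w - m‖^2 + 1) ≤ (2*ε * (‖w - m‖^2 + 1)⁻¹) * (‖w - m‖^2 + 1) := by
                exact mul_le_mul_of_nonneg_right h7 hden.le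
            _ = 2*ε := by field_simp
        have h9 : t/2 * ‖w - m‖^2 ≤ ε := by nlinarith [ht0.le, sq_nonneg ‖w - m‖]
        linarith
      exact_mod_cast hreal
  refine ⟨hsub, ?_⟩
  -- compute the conjugate
  have hconj : Econj (fun w => ((1/2 * ‖w‖^2 : ℝ) : EReal) + J w) p =
      ((1/2 * ‖p‖^2 - 1/2 * ‖m - p‖^2 - jm : ℝ) : EReal) := by
    apply le_antisymm
    · apply iSup_le
      intro w
      by_cases hw : J w = ⊤
      · beta_reduce
        rw [hw, EReal.add_top_of_ne_bot (EReal.coe_ne_bot _), EReal.sub_top]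
        exact bot_le
      · beta_reduce
        have hjw : (((J w).toReal : ℝ) : EReal) = J w := EReal.coe_toReal hw (hbot w)
        have hmw := hm w
        rw [← hjm, ← hjw] at hmw
        have hmw' : (1/2 * ‖m - p‖^2 + jm : ℝ) ≤ 1/2 * ‖w - p‖^2 + (J w).toReal := by
          exact_mod_cast hmw
        rw [← hjw]
        have : ((⟪p, w⟫ : ℝ) : EReal) - (((1/2 * ‖w‖^2 : ℝ) : EReal) + (((J w).toReal : ℝ) : EReal))
            = ((⟪p, w⟫ - (1/2 * ‖w‖^2 + (J w).toReal) : ℝ) : EReal) := by norm_cast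
        rw [this]
        apply EReal.coe_le_coe_iff.mpr
        have hnorm := norm_sub_sq_real w p
        have hcomm := real_inner_comm w p
        linarith
    · have heq : ((1/2 * ‖p‖^2 - 1/2 * ‖m - p‖^2 - jm : ℝ) : EReal) =
          ((⟪p, m⟫ : ℝ) : EReal) - (((1/2 * ‖m‖^2 : ℝ) : EReal) + J m) := by
        rw [← hjm]
        have : (((1/2 * ‖m‖^2 : ℝ) : EReal) + ((jm : ℝ) : EReal)) = ((1/2 * ‖m‖^2 + jm : ℝ) : EReal) := by
          norm_cast
        rw [this, ← EReal.coe_sub]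
        apply congrArg
        have hnorm := norm_sub_sq_real m p
        have hcomm := real_inner_comm m p
        linarith
      rw [heq]
      exact le_iSup (fun w => ((⟪p, w⟫ : ℝ) : EReal) - (((1/2 * ‖w‖^2 : ℝ) : EReal) + J w)) m
  have hju : (((J u).toReal : ℝ) : EReal) = J u := EReal.coe_toReal hu (hbot u)
  set ju : ℝ := (J u).toReal
  unfold BregLoss
  rw [hconj, ← hju, ← hjm]
  have lhs_eq : (((1/2 * ‖u‖^2 : ℝ) : EReal) + ((ju:ℝ):EReal)
      + ((1/2 * ‖p‖^2 - 1/2 * ‖m - p‖^2 - jm : ℝ) : EReal) - ((⟪p, u⟫ : ℝ) : EReal))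
      = ((1/2 * ‖u‖^2 + ju + (1/2 * ‖p‖^2 - 1/2 * ‖m - p‖^2 - jm) - ⟪p, u⟫ : ℝ) : EReal) := by
    norm_cast
  have rhs_eq : (((1/2 * ‖u - m‖^2 : ℝ) : EReal)
      + (((ju:ℝ):EReal) - ((jm:ℝ):EReal) - ((⟪p - m, u - m⟫ : ℝ) : EReal)))
      = ((1/2 * ‖u - m‖^2 + (ju - jm - ⟪p - m, u - m⟫) : ℝ) : EReal) := by
    norm_cast
  rw [lhs_eq, rhs_eq]
  apply congrArg
  have e1 := norm_sub_sq_real u m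
  have e2 := norm_sub_sq_real m p
  have e3 : ⟪p - m, u - m⟫ = ⟪p, u⟫ - ⟪p, m⟫ - ⟪m, u⟫ + ⟪m, m⟫ := by
    simp only [inner_sub_left, inner_sub_right]; ring
  have e4 : ⟪m, m⟫ = ‖m‖^2 := real_inner_self_eq_norm_sq m
  have e5 := real_inner_comm u m
  have e6 := real_inner_comm m p
  linarith
end
end

section
/- Let Z, Y be real Hilbert spaces, K : Z → Y bounded linear, J proper convex lsc, u† ∈ dom(J). Define G_J(v) := B_J(u†, u† + K*v). If v ∈ Y satisfies K*v ∈ ∂J(u†), then v is a global minimizer of G_J. Conversely, if v is a global minimizer of G_J and G_J is differentiable at v with ∇G_J(v) = K(prox_J(u† + K*v) − u†) = 0 and K is injective, then K*v ∈ ∂J(u†). -/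
open RealInnerProductSpace

noncomputable section

variable {Z : Type*} [NormedAddCommGroup Z] [InnerProductSpace ℝ Z] [CompleteSpace Z]

section AuxSC
variable {Z : Type*} [NormedAddCommGroup Z] [InnerProductSpace ℝ Z]

lemma econj_lower (J : Z → EReal) (udag : Z) (j : ℝ) (hj : J udag = (j : EReal)) (p : Z) :
    ((⟪p, udag⟫ - (1/2 * ‖udag‖^2 + j) : ℝ) : EReal)
      ≤ Econj (fun w => ((1/2 * ‖w‖^2 : ℝ) : EReal) + J w) p := by
  have h := le_iSup (fun u => ((⟪p, u⟫ : ℝ) : EReal)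
    - (((1/2 * ‖u‖^2 : ℝ) : EReal) + J u)) udag
  refine le_trans (le_of_eq ?_) h
  rw [hj, ← EReal.coe_add, ← EReal.coe_sub]

lemma bregloss_nonneg (J : Z → EReal) (udag : Z) (j : ℝ) (hj : J udag = (j : EReal)) (p : Z) :
    0 ≤ BregLoss J udag p := by
  have hb := econj_lower J udag j hj p
  unfold BregLoss
  rw [hj]
  rcases eq_or_ne (Econj (fun w => ((1/2 * ‖w‖^2 : ℝ) : EReal) + J w) p) ⊤ with h | h
  · rw [h, ← EReal.coe_add]
    have h2 : ((1/2 * ‖udag‖^2 + j : ℝ) : EReal) + ⊤ = ⊤ := EReal.coe_add_top _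
    rw [h2, EReal.top_sub_coe]
    exact le_top
  · have hbot : Econj (fun w => ((1/2 * ‖w‖^2 : ℝ) : EReal) + J w) p ≠ ⊥ := by
      intro hb'
      rw [hb'] at hb
      exact (EReal.coe_ne_bot _) (le_bot_iff.mp hb)
    obtain ⟨s, hs⟩ : ∃ s : ℝ, Econj (fun w => ((1/2 * ‖w‖^2 : ℝ) : EReal) + J w) p = (s : EReal) :=
      ⟨_, (EReal.coe_toReal h hbot).symm⟩
    rw [hs] at hb ⊢
    rw [← EReal.coe_add, ← EReal.coe_add, ← EReal.coe_sub]
    rw [EReal.coe_le_coe_iff] at hb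
    exact EReal.coe_nonneg.mpr (by linarith)

lemma econj_eq_of_subdiff (J : Z → EReal) (udag : Z) (j : ℝ) (hj : J udag = (j : EReal))
    (hbot : ∀ u, J u ≠ ⊥) (c : Z) (hc : c ∈ Subdiff J udag) :
    Econj (fun w => ((1/2 * ‖w‖^2 : ℝ) : EReal) + J w) (udag + c)
      = ((⟪udag + c, udag⟫ - (1/2 * ‖udag‖^2 + j) : ℝ) : EReal) := by
  refine le_antisymm ?_ (econj_lower J udag j hj _)
  refine iSup_le fun u => ?_
  beta_reduce
  rcases eq_or_ne (J u) ⊤ with h | h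
  · rw [h]
    have h2 : ((1/2 * ‖u‖^2 : ℝ) : EReal) + ⊤ = ⊤ := EReal.coe_add_top _
    rw [h2]
    simp
  · obtain ⟨a, ha⟩ : ∃ a : ℝ, J u = (a : EReal) := ⟨_, (EReal.coe_toReal h (hbot u)).symm⟩
    have hsub := hc u
    rw [hj, ha, ← EReal.coe_add, EReal.coe_le_coe_iff] at hsub
    rw [ha, ← EReal.coe_add, ← EReal.coe_sub, EReal.coe_le_coe_iff]
    have e1 : ⟪udag + c, u⟫ = ⟪udag, u⟫ + ⟪c, u⟫ := inner_add_left _ _ _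
    have e2 : ⟪udag + c, udag⟫ = ⟪udag, udag⟫ + ⟪c, udag⟫ := inner_add_left _ _ _
    have e3 : ⟪c, u - udag⟫ = ⟪c, u⟫ - ⟪c, udag⟫ := inner_sub_right _ _ _
    have e4 : ‖u - udag‖^2 = ‖u‖^2 - 2*⟪u, udag⟫ + ‖udag‖^2 := norm_sub_sq_real u udag
    have e5 : ⟪u, udag⟫ = ⟪udag, u⟫ := real_inner_comm udag u
    have e6 : ⟪udag, udag⟫ = ‖udag‖^2 := real_inner_self_eq_norm_sq udag
    nlinarith [sq_nonneg ‖u - udag‖]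

end AuxSC

variable {Y : Type*} [NormedAddCommGroup Y] [InnerProductSpace ℝ Y] [CompleteSpace Y]

/-- Source condition elements are global minimisers of G_J(v) = B_J(u†, u† + K⋆v);
conversely a global minimiser with vanishing gradient
∇G_J(v) = K(prox_J(u† + K⋆v) - u†) = 0 satisfies the source condition when K is
injective. -/
theorem sc_iff_min_of_GJ (K : Z →L[ℝ] Y) (J : Z → EReal)
    (hproper : ProperE J) (hconv : EConvexOn J) (hlsc : LowerSemicontinuous J)
    (udag : Z) (hdom : J udag ≠ ⊤) :
    (∀ v : Y, (ContinuousLinearMap.adjoint K) v ∈ Subdiff J udag →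
      ∀ w : Y, BregLoss J udag (udag + (ContinuousLinearMap.adjoint K) v)
        ≤ BregLoss J udag (udag + (ContinuousLinearMap.adjoint K) w)) ∧
    (∀ v : Y,
      (∀ w : Y, BregLoss J udag (udag + (ContinuousLinearMap.adjoint K) v)
        ≤ BregLoss J udag (udag + (ContinuousLinearMap.adjoint K) w)) →
      ∀ m : Z, IsProx J (udag + (ContinuousLinearMap.adjoint K) v) m →
      K (m - udag) = 0 → Function.Injective K →
      (ContinuousLinearMap.adjoint K) v ∈ Subdiff J udag) := by
  obtain ⟨-, hbot⟩ := hproper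
  have hj : J udag = ((J udag).toReal : EReal) := (EReal.coe_toReal hdom (hbot udag)).symm
  set j := (J udag).toReal with hjdef
  constructor
  · intro v hv w
    have h0 : BregLoss J udag (udag + (ContinuousLinearMap.adjoint K) v) = 0 := by
      unfold BregLoss
      rw [econj_eq_of_subdiff J udag j hj hbot _ hv, hj,
        ← EReal.coe_add, ← EReal.coe_add, ← EReal.coe_sub]
      norm_num
    rw [h0]
    exact bregloss_nonneg J udag j hj _
  · intro v _hmin m hprox hK0 hKinj
    set c := (ContinuousLinearMap.adjoint K) v with hcdef
    have hm : m = udag := by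
      have h1 : K (m - udag) = K 0 := by rw [hK0, map_zero]
      have := hKinj h1
      exact sub_eq_zero.mp this
    rw [hm] at hprox
    intro w
    rcases eq_or_ne (J w) ⊤ with h | h
    · rw [h]; exact le_top
    · obtain ⟨a, ha⟩ : ∃ a : ℝ, J w = (a : EReal) := ⟨_, (EReal.coe_toReal h (hbot w)).symm⟩
      rw [hj, ha, ← EReal.coe_add, EReal.coe_le_coe_iff]
      set x := w - udag with hx
      have key : ∀ t : ℝ, 0 < t → t ≤ 1 →
          ⟪c, x⟫ ≤ t/2 * ‖x‖^2 + a - j := by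
        intro t ht ht1
        have hcv := hconv udag w (1 - t) t (by linarith) ht.le (by ring)
        rw [hj, ha, ← EReal.coe_mul, ← EReal.coe_mul, ← EReal.coe_add] at hcv
        set wt := (1 - t) • udag + t • w with hwt
        have hwtt : J wt ≠ ⊤ := by
          intro htop
          rw [htop] at hcv
          exact (EReal.coe_ne_top _) (top_le_iff.mp hcv)
        obtain ⟨b, hb⟩ : ∃ b : ℝ, J wt = (b : EReal) := ⟨_, (EReal.coe_toReal hwtt (hbot wt)).symm⟩
        rw [hb, EReal.coe_le_coe_iff] at hcv
        have hpx := hprox wt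
        rw [hj, hb, ← EReal.coe_add, ← EReal.coe_add, EReal.coe_le_coe_iff] at hpx
        have n1 : ‖udag - (udag + c)‖ = ‖c‖ := by
          rw [show udag - (udag + c) = -c by abel, norm_neg]
        have n2 : wt - (udag + c) = t • x - c := by
          rw [hwt, hx]
          module
        have n3 : ‖t • x - c‖^2 = ‖t • x‖^2 - 2 * (t * ⟪x, c⟫) + ‖c‖^2 := by
          rw [norm_sub_sq_real, real_inner_smul_left]
        have n4 : ‖t • x‖^2 = t^2 * ‖x‖^2 := by
          rw [norm_smul, mul_pow]
          simp [abs_of_pos ht, sq_abs]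
        rw [n1, n2, n3, n4] at hpx
        have e5 : ⟪x, c⟫ = ⟪c, x⟫ := real_inner_comm c x
        have h2 : t * ⟪c, x⟫ ≤ t * (t/2 * ‖x‖^2 + a - j) := by nlinarith
        exact (mul_le_mul_iff_right₀ ht).mp h2
      have hfin : ∀ ε : ℝ, 0 < ε → j + ⟪c, x⟫ ≤ a + ε := by
        intro ε hε
        have hS : (0:ℝ) ≤ ‖x‖^2 := sq_nonneg _
        set t := min 1 (ε / (‖x‖^2/2 + 1)) with htdef
        have hd : (0:ℝ) < ‖x‖^2/2 + 1 := by linarith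
        have ht : 0 < t := lt_min one_pos (div_pos hε hd)
        have ht1 : t ≤ 1 := min_le_left _ _
        have hkey := key t ht ht1
        have ht2 : t ≤ ε / (‖x‖^2/2 + 1) := min_le_right _ _
        have ht3 : t * (‖x‖^2/2 + 1) ≤ ε := by
          calc t * (‖x‖^2/2 + 1) ≤ (ε / (‖x‖^2/2 + 1)) * (‖x‖^2/2 + 1) := by
                exact mul_le_mul_of_nonneg_right ht2 hd.le
            _ = ε := div_mul_cancel₀ ε hd.ne'
        nlinarith
      linarith [le_of_forall_pos_le_add hfin]
end
end

section
/- Let Z, Y be real Hilbert spaces, K : Z → Y bounded linear and injective, J proper convex lsc, u† ∈ dom(J). If v ∈ Y satisfies K u† = K(prox_J(u† + K*v)), then K*v ∈ ∂J(u†). -/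
open RealInnerProductSpace

noncomputable section

variable {Z : Type*} [NormedAddCommGroup Z] [InnerProductSpace ℝ Z] [CompleteSpace Z]

variable {Y : Type*} [NormedAddCommGroup Y] [InnerProductSpace ℝ Y] [CompleteSpace Y]

/-- If K is injective and K u† = K (prox_J(u† + K⋆v)), then K⋆v ∈ ∂J(u†). -/
theorem injective_vanishing_gradient_implies_sc (K : Z →L[ℝ] Y)
    (hinj : Function.Injective K) (J : Z → EReal)
    (hproper : ProperE J) (hconv : EConvexOn J) (hlsc : LowerSemicontinuous J)
    (udag : Z) (hdom : J udag ≠ ⊤) (v : Y) (m : Z)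
    (hm : IsProx J (udag + (ContinuousLinearMap.adjoint K) v) m)
    (heq : K udag = K m) :
    (ContinuousLinearMap.adjoint K) v ∈ Subdiff J udag := by
  obtain ⟨-, hbot⟩ := hproper
  rw [show m = udag from (hinj heq).symm] at hm
  intro w
  by_cases hw : J w = ⊤
  · rw [hw]; exact le_top
  set p := (ContinuousLinearMap.adjoint K) v with hp
  set ju := (J udag).toReal with hju'
  set jw := (J w).toReal with hjw'
  have hju : J udag = (ju : EReal) := (EReal.coe_toReal hdom (hbot udag)).symm
  have hjw : J w = (jw : EReal) := (EReal.coe_toReal hw (hbot w)).symm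
  set d := w - udag with hd
  have key : ∀ t : ℝ, 0 < t → t ≤ 1 → ju + ⟪p, d⟫ ≤ jw + t * (‖d‖^2/2) := by
    intro t ht0 ht1
    have hconvt := hconv udag w (1 - t) t (by linarith) (le_of_lt ht0) (by ring)
    have hrw : (1-t) • udag + t • w = udag + t • d := by
      rw [hd]; module
    rw [hrw, hju, hjw] at hconvt
    have hcoe : ((1-t : ℝ) : EReal) * ((ju:ℝ):EReal) + ((t:ℝ):EReal) * ((jw:ℝ):EReal)
        = (((1-t)*ju + t*jw : ℝ) : EReal) := by norm_cast
    rw [hcoe] at hconvt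
    have hmt := hm (udag + t • d)
    rw [hju] at hmt
    have hchain : ((1/2 * ‖udag - (udag + p)‖^2 + ju : ℝ) : EReal)
        ≤ ((1/2 * ‖(udag + t • d) - (udag + p)‖^2 + ((1-t)*ju + t*jw) : ℝ) : EReal) := by
      push_cast
      calc ((1/2 * ‖udag - (udag + p)‖^2 : ℝ) : EReal) + ((ju:ℝ):EReal)
          ≤ ((1/2 * ‖(udag + t • d) - (udag + p)‖^2 : ℝ) : EReal) + J (udag + t • d) := hmt
        _ ≤ ((1/2 * ‖(udag + t • d) - (udag + p)‖^2 : ℝ) : EReal)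
            + (((1-t)*ju + t*jw : ℝ) : EReal) := by
            exact add_le_add_right hconvt _
    have hre : 1/2 * ‖udag - (udag + p)‖^2 + ju
        ≤ 1/2 * ‖(udag + t • d) - (udag + p)‖^2 + ((1-t)*ju + t*jw) := by
      exact_mod_cast hchain
    have e1 : udag - (udag + p) = -p := by abel
    have e2 : (udag + t • d) - (udag + p) = t • d - p := by abel
    rw [e1, e2] at hre
    have hn1 : ‖-p‖^2 = ‖p‖^2 := by rw [norm_neg]
    have hn2 : ‖t • d - p‖^2 = ‖t • d‖^2 - 2 * ⟪t • d, p⟫ + ‖p‖^2 := by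
      rw [@norm_sub_sq_real]
    have hn3 : ‖t • d‖^2 = t^2 * ‖d‖^2 := by
      rw [norm_smul]; simp [abs_of_pos ht0]; ring
    have hn4 : ⟪t • d, p⟫ = t * ⟪d, p⟫ := real_inner_smul_left d p t
    have hn5 : ⟪p, d⟫ = ⟪d, p⟫ := real_inner_comm d p
    rw [hn1, hn2, hn3, hn4] at hre
    rw [hn5]
    nlinarith [sq_nonneg t, sq_nonneg ‖d‖]
  have hfinal : ju + ⟪p, d⟫ ≤ jw := by
    by_contra hcon
    push_neg at hcon
    set c := ju + ⟪p, d⟫ - jw with hc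
    have hcpos : 0 < c := by simp [hc]; linarith
    set C := ‖d‖^2/2 with hC
    have hC0 : 0 ≤ C := by positivity
    set t := min 1 (c/(C+c)) with ht
    have ht0 : 0 < t := by
      apply lt_min one_pos
      positivity
    have ht1 : t ≤ 1 := min_le_left _ _
    have := key t ht0 ht1
    have htC : t * C < c := by
      have h2 : t ≤ c/(C+c) := min_le_right _ _
      have h3 : t * C ≤ (c/(C+c)) * C := by
        apply mul_le_mul_of_nonneg_right h2 hC0
      have h4 : (c/(C+c)) * C < c := by
        rw [div_mul_eq_mul_div, div_lt_iff₀ (by linarith)]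
        nlinarith
      linarith
    linarith
  rw [hju, hjw]
  have hcast : ((ju:ℝ):EReal) + ((⟪p, w - udag⟫:ℝ):EReal) = ((ju + ⟪p, d⟫ : ℝ):EReal) := by
    rw [hd]; norm_cast
  rw [hcast]
  exact_mod_cast hfinal
end
end

section
/- Let Z, Y be real Hilbert spaces, K : Z → Y bounded linear, J : Z → ℝ ∪ {∞} proper convex lsc, u† ∈ Z, f = K u†, and f^δ ∈ Y with ‖f − f^δ‖ ≤ δ. Suppose u_α minimizes u ↦ ½‖Ku − f^δ‖² + α J(u) with optimality certificate p_α ∈ ∂J(u_α) satisfying K*(K u_α − f^δ) + α p_α = 0, and suppose v ∈ Y satisfies K*v ∈ ∂J(u†). Then ½‖K u_α − f + α v‖² + ½‖K u_α − f^δ‖² + α D^symm(u_α, u†) = ½‖f − f^δ‖² + (α²/2)‖v‖², where D^symm(u_α,u†) := ⟨u_α − u†, p_α − K*v⟩. -/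
/-! The optimality condition `K*(K u_α - f^δ) + α p_α = 0` turns `α D^symm(u_α, u†)` into
`-⟪K u_α - f, K u_α - f^δ + α v⟫`, since `K u† = f`. With `a = K u_α - f`, `b = K u_α - f^δ`
the identity is then the expansion
`½‖a + αv‖² + ½‖b‖² = ½‖a - b‖² + (α²/2)‖v‖² + ⟪a, b + αv⟫`, where `a - b = f^δ - f`. -/

open RealInnerProductSpace

noncomputable section

variable {Z : Type*} [NormedAddCommGroup Z] [InnerProductSpace ℝ Z] [CompleteSpace Z]

variable {Y : Type*} [NormedAddCommGroup Y] [InnerProductSpace ℝ Y] [CompleteSpace Y]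

theorem half_norm_add_smul_sq_add_half_norm_sq {E : Type*} [NormedAddCommGroup E]
    [InnerProductSpace ℝ E] (a b c : E) (α : ℝ) :
    1/2 * ‖a + α • c‖^2 + 1/2 * ‖b‖^2
      = 1/2 * ‖a - b‖^2 + α^2 / 2 * ‖c‖^2 + ⟪a, b + α • c⟫ := by
  rw [norm_add_sq_real, norm_sub_sq_real, inner_add_right, norm_smul, inner_smul_right,
    Real.norm_eq_abs, mul_pow, sq_abs]
  ring

theorem smul_inner_sub_sub_adjoint_of_optimality {K : Z →L[ℝ] Y} {u w p : Z} {g v : Y} {α : ℝ}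
    (hopt : (ContinuousLinearMap.adjoint K) (K u - g) + α • p = 0) :
    α * ⟪u - w, p - (ContinuousLinearMap.adjoint K) v⟫ = -⟪K u - K w, K u - g + α • v⟫ := by
  have hαp : α • p = -(ContinuousLinearMap.adjoint K) (K u - g) := eq_neg_of_add_eq_zero_right hopt
  rw [← map_sub, inner_add_right, inner_smul_right, ← ContinuousLinearMap.adjoint_inner_right,
    ← ContinuousLinearMap.adjoint_inner_right, inner_sub_right, mul_sub, ← inner_smul_right, hαp,
    inner_neg_right]
  ring

theorem error_identity_general (K : Z →L[ℝ] Y)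
    (udag ualpha : Z) (f fdelta : Y) (v : Y) (palpha : Z) (alpha : ℝ)
    (hf : f = K udag)
    (hopt : (ContinuousLinearMap.adjoint K) (K ualpha - fdelta) + alpha • palpha = 0) :
    1/2 * ‖K ualpha - f + alpha • v‖^2 + 1/2 * ‖K ualpha - fdelta‖^2
        + alpha * ⟪ualpha - udag, palpha - (ContinuousLinearMap.adjoint K) v⟫
      = 1/2 * ‖f - fdelta‖^2 + alpha^2 / 2 * ‖v‖^2 := by
  have hsymm := smul_inner_sub_sub_adjoint_of_optimality (w := udag) (v := v) hopt
  have hdiff : K ualpha - f - (K ualpha - fdelta) = -(f - fdelta) := by abel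
  rw [hsymm, half_norm_add_smul_sq_add_half_norm_sq, hdiff, norm_neg, hf]
  ring

/-- The exact error identity for variational regularisation under the source
condition: ½‖Ku_α - f + αv‖² + ½‖Ku_α - f^δ‖² + α D^symm(u_α, u†)
= ½‖f - f^δ‖² + (α²/2)‖v‖². -/
theorem error_identity (K : Z →L[ℝ] Y) (J : Z → EReal)
    (hproper : ProperE J) (hconv : EConvexOn J) (hlsc : LowerSemicontinuous J)
    (udag ualpha : Z) (f fdelta : Y) (v : Y) (palpha : Z) (alpha delta : ℝ)
    (halpha : 0 < alpha) (hf : f = K udag) (hnoise : ‖f - fdelta‖ ≤ delta)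
    (hpalpha : palpha ∈ Subdiff J ualpha)
    (hopt : (ContinuousLinearMap.adjoint K) (K ualpha - fdelta) + alpha • palpha = 0)
    (hsc : (ContinuousLinearMap.adjoint K) v ∈ Subdiff J udag) :
    1/2 * ‖K ualpha - f + alpha • v‖^2 + 1/2 * ‖K ualpha - fdelta‖^2
        + alpha * ⟪ualpha - udag, palpha - (ContinuousLinearMap.adjoint K) v⟫
      = 1/2 * ‖f - fdelta‖^2 + alpha^2 / 2 * ‖v‖^2 :=
  error_identity_general K udag ualpha f fdelta v palpha alpha hf hopt
end
end

section
/- Under the same assumptions as the error identity (u_α minimizer with subgradient p_α, source element v with K*v ∈ ∂J(u†), ‖f − f^δ‖ ≤ δ, f = Ku†), one has the estimate (1/(2α))‖K u_α − f + α v‖² + (1/(2α))‖K u_α − f^δ‖² + D^symm(u_α, u†) ≤ (α/2)‖v‖² + δ²/(2α) for every α > 0. -/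
open RealInnerProductSpace

noncomputable section

variable {Z : Type*} [NormedAddCommGroup Z] [InnerProductSpace ℝ Z] [CompleteSpace Z]

variable {Y : Type*} [NormedAddCommGroup Y] [InnerProductSpace ℝ Y] [CompleteSpace Y]

/-- The error estimate: (1/(2α))‖Ku_α - f + αv‖² + (1/(2α))‖Ku_α - f^δ‖²
+ D^symm(u_α, u†) ≤ (α/2)‖v‖² + δ²/(2α). -/
theorem error_estimate (K : Z →L[ℝ] Y) (J : Z → EReal)
    (hproper : ProperE J) (hconv : EConvexOn J) (hlsc : LowerSemicontinuous J)
    (udag ualpha : Z) (f fdelta : Y) (v : Y) (palpha : Z) (alpha delta : ℝ)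
    (halpha : 0 < alpha) (hf : f = K udag) (hnoise : ‖f - fdelta‖ ≤ delta)
    (hpalpha : palpha ∈ Subdiff J ualpha)
    (hopt : (ContinuousLinearMap.adjoint K) (K ualpha - fdelta) + alpha • palpha = 0)
    (hsc : (ContinuousLinearMap.adjoint K) v ∈ Subdiff J udag) :
    1/(2*alpha) * ‖K ualpha - f + alpha • v‖^2
        + 1/(2*alpha) * ‖K ualpha - fdelta‖^2
        + ⟪ualpha - udag, palpha - (ContinuousLinearMap.adjoint K) v⟫
      ≤ alpha/2 * ‖v‖^2 + delta^2/(2*alpha) := by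
  set r := K ualpha - f with hr
  set e := f - fdelta with he
  have hKd : K (ualpha - udag) = r := by
    simp [hr, hf, map_sub]
  have hre : K ualpha - fdelta = r + e := by
    simp [hr, he]
  -- express palpha
  have hp : alpha • palpha = -(ContinuousLinearMap.adjoint K) (r + e) := by
    rw [← hre]; linear_combination (norm := abel) hopt
  have hD : ⟪ualpha - udag, palpha - (ContinuousLinearMap.adjoint K) v⟫
      = -(1/alpha) * ⟪r, r + e⟫ - ⟪r, v⟫ := by
    have h1 : ⟪ualpha - udag, palpha⟫ = -(1/alpha) * ⟪r, r + e⟫ := by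
      have := congrArg (fun x => ⟪ualpha - udag, x⟫) hp
      simp only [inner_smul_right, inner_neg_right,
        ContinuousLinearMap.adjoint_inner_right, hKd] at this
      field_simp at this ⊢
      linarith
    have h2 : ⟪ualpha - udag, (ContinuousLinearMap.adjoint K) v⟫ = ⟪r, v⟫ := by
      rw [ContinuousLinearMap.adjoint_inner_right, hKd]
    rw [inner_sub_right, h1, h2]
  rw [hre, hD]
  have e1 : ‖r + alpha • v‖^2 = ‖r‖^2 + 2*(alpha*⟪r,v⟫) + alpha^2*‖v‖^2 := by
    rw [norm_add_sq_real, inner_smul_right, norm_smul]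
    simp [mul_pow, abs_of_pos halpha]
  have e2 : ‖r + e‖^2 = ‖r‖^2 + 2*⟪r,e⟫ + ‖e‖^2 := by
    rw [norm_add_sq_real]
  have e3 : ⟪r, r + e⟫ = ‖r‖^2 + ⟪r,e⟫ := by
    rw [inner_add_right, real_inner_self_eq_norm_sq]
  rw [e1, e2, e3]
  have hd : 0 ≤ delta := le_trans (norm_nonneg _) hnoise
  have hesq : ‖e‖^2 ≤ delta^2 := by nlinarith [norm_nonneg e]
  have ha : alpha ≠ 0 := ne_of_gt halpha
  field_simp
  nlinarith [sq_nonneg alpha]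
end
end

section
/- Under the same assumptions, with the a-priori parameter choice α(δ) = δ/‖v‖ (for v ≠ 0), the symmetric Bregman distance satisfies D^symm(u_{α(δ)}, u†) ≤ ‖v‖ δ, i.e., the convergence rate is O(δ). -/
open RealInnerProductSpace

noncomputable section

variable {Z : Type*} [NormedAddCommGroup Z] [InnerProductSpace ℝ Z] [CompleteSpace Z]

variable {Y : Type*} [NormedAddCommGroup Y] [InnerProductSpace ℝ Y] [CompleteSpace Y]

/-! Testing the optimality condition `K*(K u_α - f^δ) + α p_α = 0` against `u_α - u†` turns
`α D^symm(u_α, u†)` into `-⟪d, d + e⟫` with `d = K u_α - K u†` and `e = K u† - f^δ + α v`.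
As a function of `‖d‖` this is a downward parabola, maximal value `‖e‖² / 4 ≤ (δ + α‖v‖)² / 4`,
and the choice `α = δ / ‖v‖` balances the two error terms to give `α D^symm ≤ δ² = α ‖v‖ δ`. -/

open ContinuousLinearMap

theorem neg_inner_self_add_le_norm_sq_div_four {E : Type*} [NormedAddCommGroup E]
    [InnerProductSpace ℝ E] (d e : E) : -⟪d, d + e⟫ ≤ ‖e‖ ^ 2 / 4 := by
  have hcs : -⟪d, e⟫ ≤ ‖d‖ * ‖e‖ := (neg_le_abs _).trans (abs_real_inner_le_norm d e)
  rw [inner_add_right, real_inner_self_eq_norm_sq]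
  nlinarith [sq_nonneg (‖d‖ - ‖e‖ / 2)]

theorem mul_inner_sub_adjoint_eq_of_adjoint_add_smul_eq_zero (K : Z →L[ℝ] Y) {u u' p : Z}
    {y v : Y} {α : ℝ} (hopt : adjoint K (K u - y) + α • p = 0) :
    α * ⟪u - u', p - adjoint K v⟫ = -⟪K u - K u', (K u - K u') + (K u' - y + α • v)⟫ := by
  have hαp : α • p = -adjoint K (K u - y) := eq_neg_of_add_eq_zero_right hopt
  calc α * ⟪u - u', p - adjoint K v⟫
      = ⟪u - u', α • p - α • adjoint K v⟫ := by rw [← smul_sub, real_inner_smul_right]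
    _ = -⟪u - u', adjoint K (K u - y + α • v)⟫ := by
        rw [hαp, map_add, map_smul, ← inner_neg_right, neg_add]; abel_nf
    _ = -⟪K u - K u', (K u - K u') + (K u' - y + α • v)⟫ := by
        rw [adjoint_inner_right, map_sub]; congr 2; abel

theorem mul_inner_sub_adjoint_le_of_adjoint_add_smul_eq_zero (K : Z →L[ℝ] Y) {u u' p : Z}
    {y v : Y} {α δ : ℝ} (hα : 0 ≤ α) (hnoise : ‖K u' - y‖ ≤ δ)
    (hopt : adjoint K (K u - y) + α • p = 0) :
    α * ⟪u - u', p - adjoint K v⟫ ≤ (δ + α * ‖v‖) ^ 2 / 4 := by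
  have he : ‖K u' - y + α • v‖ ≤ δ + α * ‖v‖ := by
    calc ‖K u' - y + α • v‖ ≤ ‖K u' - y‖ + ‖α • v‖ := norm_add_le _ _
      _ ≤ δ + α * ‖v‖ := by rw [norm_smul, Real.norm_of_nonneg hα]; linarith
  rw [mul_inner_sub_adjoint_eq_of_adjoint_add_smul_eq_zero K hopt]
  refine (neg_inner_self_add_le_norm_sq_div_four _ _).trans ?_
  gcongr

theorem convergence_rate_general (K : Z →L[ℝ] Y)
    (udag ualpha : Z) (f fdelta : Y) (v : Y) (palpha : Z) (alpha delta : ℝ)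
    (hdelta : 0 < delta) (hv : v ≠ 0) (halpha : alpha = delta / ‖v‖)
    (hf : f = K udag) (hnoise : ‖f - fdelta‖ ≤ delta)
    (hopt : (ContinuousLinearMap.adjoint K) (K ualpha - fdelta) + alpha • palpha = 0) :
    ⟪ualpha - udag, palpha - (ContinuousLinearMap.adjoint K) v⟫ ≤ ‖v‖ * delta := by
  subst hf
  have hα : 0 < alpha := by rw [halpha]; positivity
  have hbalance : alpha * ‖v‖ = delta := by rw [halpha]; field_simp
  have hbound := mul_inner_sub_adjoint_le_of_adjoint_add_smul_eq_zero K (v := v) hα.le hnoise hopt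
  rw [hbalance] at hbound
  refine le_of_mul_le_mul_left (hbound.trans_eq ?_) hα
  rw [← hbalance]; ring

/-- With the a-priori choice α(δ) = δ/‖v‖ the symmetric Bregman distance
satisfies D^symm(u_α, u†) ≤ ‖v‖δ, i.e. the convergence rate is O(δ). -/
theorem convergence_rate (K : Z →L[ℝ] Y) (J : Z → EReal)
    (hproper : ProperE J) (hconv : EConvexOn J) (hlsc : LowerSemicontinuous J)
    (udag ualpha : Z) (f fdelta : Y) (v : Y) (palpha : Z) (alpha delta : ℝ)
    (hdelta : 0 < delta) (hv : v ≠ 0) (halpha : alpha = delta / ‖v‖)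
    (hf : f = K udag) (hnoise : ‖f - fdelta‖ ≤ delta)
    (hpalpha : palpha ∈ Subdiff J ualpha)
    (hopt : (ContinuousLinearMap.adjoint K) (K ualpha - fdelta) + alpha • palpha = 0)
    (hsc : (ContinuousLinearMap.adjoint K) v ∈ Subdiff J udag) :
    ⟪ualpha - udag, palpha - (ContinuousLinearMap.adjoint K) v⟫ ≤ ‖v‖ * delta :=
  convergence_rate_general K udag ualpha f fdelta v palpha alpha delta hdelta hv halpha hf hnoise
    hopt
end
end

section
/- Let Z, Y be real Hilbert spaces, K : Z → Y bounded linear, J proper convex lsc, u† ∈ dom(∂J), α > 0. Then u† minimizes u ↦ ½‖Ku − g_α‖² + α J(u) for some g_α ∈ Y if and only if there exists v ∈ Y with K*v ∈ ∂J(u†); moreover the data is related to the source element by g_α = K u† + α v. -/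
open RealInnerProductSpace

noncomputable section

variable {Z : Type*} [NormedAddCommGroup Z] [InnerProductSpace ℝ Z] [CompleteSpace Z]

variable {Y : Type*} [NormedAddCommGroup Y] [InnerProductSpace ℝ Y] [CompleteSpace Y]

private lemma small_t_lemma {c d : ℝ} (hd : 0 ≤ d)
    (h : ∀ t : ℝ, 0 < t → t ≤ 1 → 0 ≤ c * t + d * t ^ 2) : 0 ≤ c := by
  by_contra hc
  push_neg at hc
  set t : ℝ := min 1 (-c / (2 * d + 1)) with ht
  have htpos : 0 < t := lt_min one_pos (div_pos (by linarith) (by linarith))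
  have ht1 : t ≤ 1 := min_le_left _ _
  have ht2 : t ≤ -c / (2 * d + 1) := min_le_right _ _
  have hdt : d * t < -c := by
    have : d * t ≤ d * (-c / (2 * d + 1)) := by
      exact mul_le_mul_of_nonneg_left ht2 hd
    have h2 : d * (-c / (2 * d + 1)) < -c := by
      rw [mul_div_assoc']
      rw [div_lt_iff₀ (by positivity)]
      nlinarith
    linarith
  have := h t htpos ht1
  nlinarith

/-- Equivalence of range condition and source condition, with the relation
g_α = K u† + α v between the data and the source condition element. -/
theorem range_condition_iff_source_condition (K : Z →L[ℝ] Y) (J : Z → EReal)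
    (hproper : ProperE J) (hconv : EConvexOn J) (hlsc : LowerSemicontinuous J)
    (udag : Z) (hdom : (Subdiff J udag).Nonempty) (alpha : ℝ) (halpha : 0 < alpha) :
    (∀ v : Y, (ContinuousLinearMap.adjoint K) v ∈ Subdiff J udag →
      ∀ u : Z, ((1/2 * ‖K udag - (K udag + alpha • v)‖^2 : ℝ) : EReal)
          + (alpha : EReal) * J udag
        ≤ ((1/2 * ‖K u - (K udag + alpha • v)‖^2 : ℝ) : EReal)
          + (alpha : EReal) * J u) ∧
    (∀ g : Y,
      (∀ u : Z, ((1/2 * ‖K udag - g‖^2 : ℝ) : EReal) + (alpha : EReal) * J udag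
        ≤ ((1/2 * ‖K u - g‖^2 : ℝ) : EReal) + (alpha : EReal) * J u) →
      ∃ v : Y, (ContinuousLinearMap.adjoint K) v ∈ Subdiff J udag ∧
        g = K udag + alpha • v) := by
  obtain ⟨⟨u0, hu0⟩, hbot⟩ := hproper
  obtain ⟨p, hp⟩ := hdom
  -- J udag is finite
  have htop : J udag ≠ ⊤ := by
    intro h
    have := hp u0
    rw [h, EReal.top_add_coe] at this
    exact hu0 (top_le_iff.mp this)
  set a : ℝ := (J udag).toReal with ha'
  have ha : J udag = (a : EReal) := (EReal.coe_toReal htop (hbot udag)).symm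
  constructor
  · -- source ⇒ range
    intro v hv u
    rcases eq_or_ne (J u) ⊤ with h | h
    · rw [h, EReal.mul_top_of_pos (by exact_mod_cast halpha), EReal.coe_add_top]
      exact le_top
    · set b : ℝ := (J u).toReal with hb'
      have hb : J u = (b : EReal) := (EReal.coe_toReal h (hbot u)).symm
      have hsub := hv u
      rw [ha, hb, ← EReal.coe_add, EReal.coe_le_coe_iff] at hsub
      rw [ContinuousLinearMap.adjoint_inner_left] at hsub
      rw [ha, hb, ← EReal.coe_mul, ← EReal.coe_mul, ← EReal.coe_add, ← EReal.coe_add,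
        EReal.coe_le_coe_iff]
      have e1 : K udag - (K udag + alpha • v) = -(alpha • v) := by abel
      have e2 : K u - (K udag + alpha • v) = (K u - K udag) - alpha • v := by abel
      rw [e1, e2, norm_neg, @norm_sub_sq_real]
      have e3 : ⟪K u - K udag, alpha • v⟫ = alpha * ⟪v, K (u - udag)⟫ := by
        rw [real_inner_smul_right, map_sub, real_inner_comm]
      rw [e3, norm_smul]
      have hK : (0:ℝ) ≤ ‖K u - K udag‖ ^ 2 := sq_nonneg _
      nlinarith [sq_nonneg ‖K u - K udag‖, mul_le_mul_of_nonneg_left hsub halpha.le]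
  · -- range ⇒ source
    intro g hg
    refine ⟨alpha⁻¹ • (g - K udag), ?_, ?_⟩
    · intro w
      rcases eq_or_ne (J w) ⊤ with h | h
      · rw [h]; exact le_top
      set b : ℝ := (J w).toReal with hb'
      have hb : J w = (b : EReal) := (EReal.coe_toReal h (hbot w)).symm
      rw [ha, hb, ← EReal.coe_add, EReal.coe_le_coe_iff,
        ContinuousLinearMap.adjoint_inner_left]
      have key : ∀ t : ℝ, 0 < t → t ≤ 1 →
          0 ≤ (⟪K udag - g, K (w - udag)⟫ + alpha * (b - a)) * t
            + (1/2 * ‖K (w - udag)‖ ^ 2) * t ^ 2 := by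
        intro t ht0 ht1
        have hgt := hg ((1 - t) • udag + t • w)
        have hc := hconv udag w (1 - t) t (by linarith) ht0.le (by ring)
        rw [ha, hb, ← EReal.coe_mul, ← EReal.coe_mul, ← EReal.coe_add] at hc
        -- case on J u_t
        set ut := (1 - t) • udag + t • w
        have hut_top : J ut ≠ ⊤ := by
          intro hT; rw [hT] at hc; exact EReal.coe_ne_top _ (top_le_iff.mp hc)
        set c : ℝ := (J ut).toReal with hc'
        have hcc : J ut = (c : EReal) := (EReal.coe_toReal hut_top (hbot ut)).symm
        rw [hcc, EReal.coe_le_coe_iff] at hc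
        rw [ha, hcc, ← EReal.coe_mul, ← EReal.coe_mul, ← EReal.coe_add, ← EReal.coe_add,
          EReal.coe_le_coe_iff] at hgt
        have eut : K ut - g = (K udag - g) + t • K (w - udag) := by
          simp only [ut, map_add, map_smul, map_sub]
          module
        rw [eut, @norm_add_sq_real] at hgt
        rw [real_inner_smul_right, norm_smul] at hgt
        have hac : alpha * c ≤ alpha * ((1 - t) * a + t * b) :=
          mul_le_mul_of_nonneg_left hc halpha.le
        have habs : ‖t‖ = t := by rw [Real.norm_eq_abs]; exact abs_of_pos ht0
        rw [habs] at hgt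
        nlinarith [hgt, hac]
      have := small_t_lemma (by positivity) key
      have hinner : ⟪alpha⁻¹ • (g - K udag), K (w - udag)⟫
          = alpha⁻¹ * ⟪g - K udag, K (w - udag)⟫ := real_inner_smul_left _ _ _
      have e4 : ⟪K udag - g, K (w - udag)⟫ = -⟪g - K udag, K (w - udag)⟫ := by
        rw [← inner_neg_left]; congr 1; abel
      rw [e4] at this
      rw [map_sub] at hinner ⊢
      rw [hinner]
      rw [map_sub] at this e4
      have halpha' : alpha ≠ 0 := ne_of_gt halpha
      field_simp
      nlinarith [this]
    · simp [smul_smul, mul_inv_cancel₀ (ne_of_gt halpha)]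
end
end

section
/- Let Z, Y be real Hilbert spaces, K : Z → Y bounded linear and injective, A : Z → Z bounded linear, b ∈ Z, H proper convex lsc, J(u) = H(Au + b), u† ∈ Z. If (v, q†) ∈ Y × Z satisfies K(K*v − A*q†) = 0 and A(A*q† − K*v) + prox_H(Au† + b + q†) − Au† − b = 0, then K*v = A*q† and Au† + b = prox_H(Au† + b + q†), hence q† ∈ ∂H(Au† + b) and K*v ∈ ∂J(u†). -/
open RealInnerProductSpace

noncomputable section

variable {Z : Type*} [NormedAddCommGroup Z] [InnerProductSpace ℝ Z] [CompleteSpace Z]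

variable {Y : Type*} [NormedAddCommGroup Y] [InnerProductSpace ℝ Y] [CompleteSpace Y]

private lemma prox_mem_subdiff {Z : Type*} [NormedAddCommGroup Z] [InnerProductSpace ℝ Z]
    (H : Z → EReal) (hproper : ProperE H) (hconv : EConvexOn H)
    (z m : Z) (hm : IsProx H z m) : (z - m) ∈ Subdiff H m := by
  have hbot : ∀ u, H u ≠ ⊥ := hproper.2
  -- H m is finite
  obtain ⟨u0, hu0⟩ := hproper.1
  have hmtop : H m ≠ ⊤ := by
    intro htop
    have h := hm u0
    rw [htop] at h
    have hl : ((1/2 * ‖m - z‖^2 : ℝ) : EReal) + ⊤ = ⊤ :=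
      EReal.add_top_of_ne_bot (EReal.coe_ne_bot _)
    rw [hl] at h
    have hlt : ((1/2 * ‖u0 - z‖^2 : ℝ) : EReal) + H u0 < ⊤ :=
      EReal.add_lt_top (EReal.coe_ne_top _) hu0
    exact absurd (lt_of_le_of_lt h hlt) (lt_irrefl ⊤)
  set a : ℝ := (H m).toReal with ha
  have hHm : H m = (a : EReal) := (EReal.coe_toReal hmtop (hbot m)).symm
  -- the key real inequality for each t ∈ (0,1]
  have hreal : ∀ (w : Z), H w ≠ ⊤ → ∀ t : ℝ, 0 < t → t ≤ 1 →
      a + ⟪z - m, w - m⟫ ≤ (H w).toReal + t * ‖w - m‖^2 / 2 := by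
    intro w hw t ht0 ht1
    set c : ℝ := (H w).toReal with hc
    have hHw : H w = (c : EReal) := (EReal.coe_toReal hw (hbot w)).symm
    have hcomb : t • w + (1 - t) • m = m + t • (w - m) := by module
    have hcv := hconv w m t (1 - t) (le_of_lt ht0) (by linarith) (by ring)
    rw [hcomb, hHw, hHm] at hcv
    have hpr := hm (m + t • (w - m))
    rw [hHm] at hpr
    have hchain : ((1/2 * ‖m - z‖^2 : ℝ) : EReal) + (a : EReal) ≤
        ((1/2 * ‖m + t • (w - m) - z‖^2 : ℝ) : EReal) +
          ((t * c + (1 - t) * a : ℝ) : EReal) := by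
      refine le_trans hpr (le_trans (add_le_add_right hcv _) ?_)
      rw [← EReal.coe_mul, ← EReal.coe_mul, ← EReal.coe_add]
    rw [← EReal.coe_add, ← EReal.coe_add, EReal.coe_le_coe_iff] at hchain
    -- expand the norm
    have hdecomp : m + t • (w - m) - z = (m - z) + t • (w - m) := by abel
    have hns : ‖m + t • (w - m) - z‖^2 =
        ‖m - z‖^2 + 2 * (t * ⟪m - z, w - m⟫) + t^2 * ‖w - m‖^2 := by
      rw [hdecomp, @norm_add_sq_real, real_inner_smul_right, norm_smul,
        Real.norm_eq_abs, abs_of_pos ht0, mul_pow]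
    rw [hns] at hchain
    have hip : ⟪z - m, w - m⟫ = -⟪m - z, w - m⟫ := by
      rw [show z - m = -(m - z) by abel, inner_neg_left]
    rw [hip]
    nlinarith [sq_nonneg (‖w - m‖), mul_pos ht0 ht0]
  intro w
  show H m + ((⟪z - m, w - m⟫ : ℝ) : EReal) ≤ H w
  by_cases hw : H w = ⊤
  · rw [hw]; exact le_top
  · have hHw : H w = (((H w).toReal : ℝ) : EReal) := (EReal.coe_toReal hw (hbot w)).symm
    rw [hHm, hHw, ← EReal.coe_add, EReal.coe_le_coe_iff]
    have : ∀ ε : ℝ, 0 < ε → a + ⟪z - m, w - m⟫ ≤ (H w).toReal + ε := by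
      intro ε hε
      set N : ℝ := ‖w - m‖^2 with hN
      have hN0 : 0 ≤ N := sq_nonneg _
      set t : ℝ := min 1 (2 * ε / (N + 1)) with htdef
      have ht0 : 0 < t := lt_min one_pos (by positivity)
      have ht1 : t ≤ 1 := min_le_left _ _
      have hkey := hreal w hw t ht0 ht1
      have htle : t ≤ 2 * ε / (N + 1) := min_le_right _ _
      rw [le_div_iff₀ (by positivity)] at htle
      nlinarith
    exact le_of_forall_pos_le_add this

/-- Vanishing partial gradients of E_H plus injectivity of K imply the
composite range/source conditions. -/
theorem composite_vanishing_gradients (K : Z →L[ℝ] Y) (hinj : Function.Injective K)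
    (A : Z →L[ℝ] Z) (b : Z) (H : Z → EReal)
    (hproper : ProperE H) (hconv : EConvexOn H) (hlsc : LowerSemicontinuous H)
    (udag : Z) (v : Y) (qdag : Z) (m : Z)
    (hm : IsProx H (A udag + b + qdag) m)
    (h1 : K ((ContinuousLinearMap.adjoint K) v - (ContinuousLinearMap.adjoint A) qdag) = 0)
    (h2 : A ((ContinuousLinearMap.adjoint A) qdag - (ContinuousLinearMap.adjoint K) v)
        + m - A udag - b = 0) :
    (ContinuousLinearMap.adjoint K) v = (ContinuousLinearMap.adjoint A) qdag ∧
    A udag + b = m ∧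
    qdag ∈ Subdiff H (A udag + b) ∧
    (ContinuousLinearMap.adjoint K) v ∈ Subdiff (fun u => H (A u + b)) udag := by
  have hKv : (ContinuousLinearMap.adjoint K) v = (ContinuousLinearMap.adjoint A) qdag := by
    have := hinj (show K ((ContinuousLinearMap.adjoint K) v
        - (ContinuousLinearMap.adjoint A) qdag) = K 0 by simpa using h1)
    exact sub_eq_zero.mp this
  have hmeq : A udag + b = m := by
    rw [hKv, sub_self, map_zero, zero_add, sub_sub] at h2
    exact (sub_eq_zero.mp h2).symm
  have hsub : qdag ∈ Subdiff H (A udag + b) := by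
    have h := prox_mem_subdiff H hproper hconv (A udag + b + qdag) m hm
    have hq : A udag + b + qdag - m = qdag := by rw [← hmeq]; abel
    rw [hq] at h
    rw [hmeq]
    exact h
  refine ⟨hKv, hmeq, hsub, ?_⟩
  intro w
  have h := hsub (A w + b)
  have hips : ⟪(ContinuousLinearMap.adjoint A) qdag, w - udag⟫
      = ⟪qdag, A w + b - (A udag + b)⟫ := by
    rw [ContinuousLinearMap.adjoint_inner_left]
    congr 1
    rw [map_sub]
    abel
  show H (A udag + b) + ((⟪(ContinuousLinearMap.adjoint K) v, w - udag⟫ : ℝ) : EReal)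
      ≤ H (A w + b)
  rw [hKv, hips]
  exact h
end
end
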